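/- Let K be a field of characteristic zero and let A be a finite-dimensional non-unital associative K-algebra. Then there exists a commutative Hopf K-algebra H together with a coaction λ : A → A ⊗ H of H on A such that for every commutative Hopf K-algebra H' and every coaction ψ : A → A ⊗ H' of H' on A, there exists a unique bialgebra homomorphism Φ : H → H' with ψ = (id_A ⊗ Φ) ∘ λ. (A bialgebra homomorphism between Hopf algebras automatically preserves the antipode, so Φ is a Hopf algebra homomorphism.) -/

import Mathlib

/-!
Statement 16: Let `A` be a finite-dimensional non-unital associative algebra over a field
`K` of characteristic zero. Then there exists a commutative Hopf `K`-algebra `H` with a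
coaction `λ : A → A ⊗ H` such that for every commutative Hopf `K`-algebra `H'` and every
coaction `ψ : A → A ⊗ H'` there is a unique bialgebra homomorphism `Φ : H → H'` with
`ψ = (id_A ⊗ Φ) ∘ λ`.
-/

open TensorProduct

universe u

/-- A coaction of a commutative `K`-bialgebra `B` on the non-unital associative algebra `A`:
a non-unital algebra homomorphism `η : A → A ⊗ B` making `A` a right `B`-comodule. -/
def IsAlgCoaction (K : Type u) [Field K]
    (A : Type u) [NonUnitalRing A] [Module K A] [SMulCommClass K A A] [IsScalarTower K A A]
    (B : Type u) [CommRing B] [Bialgebra K B]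
    (η : A →ₙₐ[K] A ⊗[K] B) : Prop :=
  (∀ a : A, TensorProduct.rid K A
      (LinearMap.lTensor A (Coalgebra.counit (R := K) (A := B)) (η a)) = a) ∧
  ∀ a : A, LinearMap.lTensor A (Coalgebra.comul (R := K) (A := B)) (η a) =
    TensorProduct.assoc K A B B (LinearMap.rTensor B (η : A →ₗ[K] A ⊗[K] B) (η a))

/-- A universal coacting commutative Hopf algebra of the non-unital associative
algebra `A`. -/
structure UniversalAlgCoactingHopfAlgebra (K : Type u) [Field K]
    (A : Type u) [NonUnitalRing A] [Module K A] [SMulCommClass K A A] [IsScalarTower K A A] :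
    Type (u + 1) where
  H : Type u
  [commRingH : CommRing H]
  [hopfAlgebraH : HopfAlgebra K H]
  lam : A →ₙₐ[K] A ⊗[K] H
  coaction : IsAlgCoaction K A H lam
  universal : ∀ (H' : Type u) [CommRing H'] [HopfAlgebra K H'], ∀ ψ : A →ₙₐ[K] A ⊗[K] H',
    IsAlgCoaction K A H' ψ →
    ∃! Φ : H →ₐc[K] H', ∀ a : A, ψ a = LinearMap.lTensor A Φ.toLinearMap (lam a)

/-!
Choose a basis `b` of `A` with structure constants `m`. Linear maps `A → A ⊗ S` are matrices `u`
over `S` (`b i ↦ ∑ k, b k ⊗ u k i`). Such a map is multiplicative iff `u` satisfies the quadratic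
relations `RespectsMul m u`, and it is a coaction of a bialgebra iff `Δ u_ki = ∑ j, u_kj ⊗ u_ji`
and `ε u_ki = δ_ki`; over a Hopf algebra such a matrix is invertible, its inverse being the
antipode applied entrywise. Hence coactions of commutative Hopf algebras on `A` are classified
by the coordinate ring `K[u_ki, t] / (t · det u - 1, RespectsMul m u)` of the automorphism group
scheme of `A`, which is itself a commutative Hopf algebra with `Δ u = u ⊗ u`.
-/

noncomputable section

namespace UniversalCoaction

open Matrix

section MatrixLemmas

variable {ι : Type*} [Fintype ι] {S : Type*} [CommRing S]

lemma sum_mul_apply_smul {M : Type*} [AddCommMonoid M] [Module S M] (u v : Matrix ι ι S)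
    (N : ι → M) (r : ι) : ∑ d, (u * v) r d • N d = ∑ c, u r c • ∑ d, v c d • N d := by
  simp only [mul_apply, Finset.sum_smul, Finset.smul_sum, smul_smul]
  exact Finset.sum_comm

lemma transpose_mul_sum_smul_mul (v : Matrix ι ι S) (a : ι → S) (N : ι → Matrix ι ι S) :
    vᵀ * (∑ c, a c • N c) * v = ∑ c, a c • (vᵀ * N c * v) := by
  simp only [Matrix.mul_sum, Matrix.sum_mul, Matrix.mul_smul, Matrix.smul_mul]

lemma transpose_mul_mul_mul (u v N : Matrix ι ι S) :
    (u * v)ᵀ * N * (u * v) = vᵀ * (uᵀ * N * u) * v := by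
  simp only [transpose_mul, Matrix.mul_assoc]

end MatrixLemmas

section RespectsMul

variable {K : Type*} [CommRing K] {ι : Type*} [Fintype ι] (m : ι → ι → ι → K)
  {S T : Type*} [CommRing S] [Algebra K S] [CommRing T] [Algebra K T]

def structMatrix (r : ι) : Matrix ι ι S :=
  Matrix.of fun k l => algebraMap K S (m k l r)

def mulDefect (u : Matrix ι ι S) (r : ι) : Matrix ι ι S :=
  uᵀ * structMatrix m r * u - ∑ c, u r c • structMatrix m c

/-- `u` respects the structure constants `m` iff `b i ↦ ∑ k, b k ⊗ u k i` is multiplicative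
(`coactionOfMatrix_map_mul_iff`); `structMatrix m r` is the Gram matrix of the `r`-th
coordinate of the product. -/
def RespectsMul (u : Matrix ι ι S) : Prop :=
  ∀ r, mulDefect m u r = 0

lemma respectsMul_iff {u : Matrix ι ι S} :
    RespectsMul m u ↔ ∀ r, uᵀ * structMatrix m r * u = ∑ c, u r c • structMatrix m c := by
  simp only [RespectsMul, mulDefect, sub_eq_zero]

lemma mulDefect_apply (u : Matrix ι ι S) (r i j : ι) :
    mulDefect m u r i j = ∑ k, ∑ l, m k l r • (u k i * u l j) - ∑ c, m i j c • u r c := by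
  simp only [mulDefect, structMatrix, Matrix.sub_apply, Matrix.sum_apply, Matrix.smul_apply,
    mul_apply, transpose_apply, of_apply, Finset.sum_mul, Algebra.smul_def,
    Algebra.algebraMap_self, RingHom.id_apply]
  rw [Finset.sum_comm]
  congr 1
  · exact Finset.sum_congr rfl fun _ _ => Finset.sum_congr rfl fun _ _ => by ring
  · exact Finset.sum_congr rfl fun _ _ => by ring

lemma mulDefect_map (f : S →ₐ[K] T) (u : Matrix ι ι S) (r : ι) :
    mulDefect m (u.map f) r = (mulDefect m u r).map f := by
  ext i j
  simp [mulDefect_apply, map_sum, Algebra.smul_def]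

variable {m}

lemma RespectsMul.map {u : Matrix ι ι S} (hu : RespectsMul m u) (f : S →ₐ[K] T) :
    RespectsMul m (u.map f) := fun r => by
  rw [mulDefect_map, hu r, Matrix.map_zero _ (map_zero f)]

lemma RespectsMul.mul {u v : Matrix ι ι S} (hu : RespectsMul m u) (hv : RespectsMul m v) :
    RespectsMul m (u * v) := by
  rw [respectsMul_iff] at *
  intro r
  rw [transpose_mul_mul_mul, hu, transpose_mul_sum_smul_mul, sum_mul_apply_smul]
  simp only [hv]

variable [DecidableEq ι]

variable (m) in
lemma respectsMul_one : RespectsMul m (1 : Matrix ι ι S) := by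
  rw [respectsMul_iff]
  intro r
  simp [Matrix.one_apply]

lemma RespectsMul.of_mul_eq_one {u w : Matrix ι ι S} (hu : RespectsMul m u)
    (huw : u * w = 1) (hwu : w * u = 1) : RespectsMul m w := by
  rw [respectsMul_iff] at *
  have h : ∀ r, structMatrix m r = ∑ c, u r c • (wᵀ * structMatrix m c * w) := fun r => by
    rw [← transpose_mul_sum_smul_mul, ← hu, ← transpose_mul_mul_mul, huw, transpose_one,
      Matrix.one_mul, Matrix.mul_one]
  intro s
  calc wᵀ * structMatrix m s * w
      = ∑ d, (w * u) s d • (wᵀ * structMatrix m d * w) := by simp [hwu, one_apply]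
    _ = ∑ c, w s c • structMatrix m c := by
      simp only [sum_mul_apply_smul, ← h]

end RespectsMul

section Presentation

open MvPolynomial

variable {K : Type*} [CommRing K] {ι : Type*} [Fintype ι] [DecidableEq ι] (m : ι → ι → ι → K)
  {S : Type*} [CommRing S] [Algebra K S]

variable (K ι) in
def polyGen : Matrix ι ι (MvPolynomial ((ι × ι) ⊕ Unit) K) :=
  Matrix.of fun k i => X (.inl (k, i))

def autRelations : Ideal (MvPolynomial ((ι × ι) ⊕ Unit) K) :=
  Ideal.span <| insert (X (.inr ()) * (polyGen K ι).det - 1) <|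
    Set.range fun p : ι × ι × ι => mulDefect m (polyGen K ι) p.1 p.2.1 p.2.2

/-- The coordinate ring of the group scheme of automorphisms of the algebra with structure
constants `m`: a point with values in `S` is a matrix `u` respecting `m` together with an
inverse of `det u`. -/
def AutCoordRing : Type _ := MvPolynomial ((ι × ι) ⊕ Unit) K ⧸ autRelations m

instance : CommRing (AutCoordRing m) := inferInstanceAs (CommRing (_ ⧸ autRelations m))

instance : Algebra K (AutCoordRing m) := inferInstanceAs (Algebra K (_ ⧸ autRelations m))

def mk : MvPolynomial ((ι × ι) ⊕ Unit) K →ₐ[K] AutCoordRing m :=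
  Ideal.Quotient.mkₐ K (autRelations m)

lemma mk_eq_zero_of_mem {p : MvPolynomial ((ι × ι) ⊕ Unit) K} (hp : p ∈ autRelations m) :
    mk m p = 0 :=
  Ideal.Quotient.eq_zero_iff_mem.2 hp

def gen : Matrix ι ι (AutCoordRing m) := (polyGen K ι).map (mk m)

def invDet : AutCoordRing m := mk m (X (.inr ()))

lemma respectsMul_gen : RespectsMul m (gen m) := fun r => by
  ext i j
  rw [gen, mulDefect_map, Matrix.map_apply, Matrix.zero_apply]
  exact mk_eq_zero_of_mem m (Ideal.subset_span (Set.mem_insert_of_mem _ ⟨(r, i, j), rfl⟩))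

lemma invDet_mul_det_gen : invDet m * (gen m).det = 1 := by
  rw [gen, invDet, ← AlgHom.mapMatrix_apply, ← AlgHom.map_det, ← map_mul, ← sub_eq_zero,
    ← map_one (mk m), ← map_sub]
  exact mk_eq_zero_of_mem m (Ideal.subset_span (Set.mem_insert _ _))

lemma map_gen_det (f : AutCoordRing m →ₐ[K] S) : f (gen m).det = ((gen m).map f).det := by
  rw [AlgHom.map_det, AlgHom.mapMatrix_apply]

variable {m}

lemma autRelations_le_ker {u : Matrix ι ι S} {s : S} (hu : RespectsMul m u)
    (hs : s * u.det = 1) :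
    autRelations m ≤ RingHom.ker (aeval (R := K) (Sum.elim (fun p => u p.1 p.2) fun _ => s)) := by
  have hpoly : (polyGen K ι).map (aeval (Sum.elim (fun p => u p.1 p.2) fun _ => s)) = u := by
    ext k i; simp [polyGen]
  rw [autRelations, Ideal.span_le]
  rintro p (rfl | ⟨⟨r, i, j⟩, rfl⟩) <;> simp only [SetLike.mem_coe, RingHom.mem_ker]
  · rw [map_sub, map_mul, AlgHom.map_det, AlgHom.mapMatrix_apply, hpoly]
    simp [hs]
  · rw [← Matrix.map_apply (f := ⇑(aeval _)), ← mulDefect_map, hpoly, hu r, Matrix.zero_apply]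

def lift (u : Matrix ι ι S) (s : S) (hu : RespectsMul m u) (hs : s * u.det = 1) :
    AutCoordRing m →ₐ[K] S :=
  Ideal.Quotient.liftₐ (autRelations m) (aeval (Sum.elim (fun p => u p.1 p.2) fun _ => s))
    fun _ ha => autRelations_le_ker hu hs ha

variable (u : Matrix ι ι S) (s : S) (hu : RespectsMul m u) (hs : s * u.det = 1)

lemma lift_mk (p : MvPolynomial ((ι × ι) ⊕ Unit) K) :
    lift u s hu hs (mk m p) = aeval (Sum.elim (fun p => u p.1 p.2) fun _ => s) p :=
  rfl

lemma lift_gen : (gen m).map (lift u s hu hs) = u := by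
  ext k i; simp [gen, polyGen, lift_mk]

lemma lift_gen_apply (k i : ι) : lift u s hu hs (gen m k i) = u k i :=
  congrFun₂ (lift_gen u s hu hs) k i

lemma algHom_ext {f g : AutCoordRing m →ₐ[K] S} (h : (gen m).map f = (gen m).map g) : f = g := by
  apply Ideal.Quotient.algHom_ext
  apply MvPolynomial.algHom_ext
  rintro (⟨k, i⟩ | ⟨⟩)
  · exact congrFun₂ h k i
  · have hf : f (invDet m) * ((gen m).map f).det = 1 := by
      rw [← map_gen_det, ← map_mul, invDet_mul_det_gen, map_one]
    have hg : ((gen m).map g).det * g (invDet m) = 1 := by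
      rw [mul_comm, ← map_gen_det, ← map_mul, invDet_mul_det_gen, map_one]
    exact left_inv_eq_right_inv hf (h ▸ hg)

end Presentation

section Hopf

open Algebra.TensorProduct (includeLeft includeRight)

variable {K : Type*} [CommRing K] {ι : Type*} [Fintype ι] [DecidableEq ι] (m : ι → ι → ι → K)

def comulHom : AutCoordRing m →ₐ[K] AutCoordRing m ⊗[K] AutCoordRing m :=
  lift ((gen m).map includeLeft * (gen m).map includeRight) (invDet m ⊗ₜ invDet m)
    (((respectsMul_gen m).map _).mul ((respectsMul_gen m).map _)) <| by
      rw [Matrix.det_mul, ← AlgHom.mapMatrix_apply, ← AlgHom.mapMatrix_apply, ← AlgHom.map_det,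
        ← AlgHom.map_det, Algebra.TensorProduct.includeLeft_apply,
        Algebra.TensorProduct.includeRight_apply, Algebra.TensorProduct.tmul_mul_tmul,
        Algebra.TensorProduct.tmul_mul_tmul,
        mul_one, one_mul, invDet_mul_det_gen, Algebra.TensorProduct.one_def]

def counitHom : AutCoordRing m →ₐ[K] K :=
  lift 1 1 (respectsMul_one m) (by simp)

def invGen : Matrix ι ι (AutCoordRing m) := invDet m • (gen m).adjugate

lemma invGen_mul_gen : invGen m * gen m = 1 := by
  rw [invGen, Matrix.smul_mul, Matrix.adjugate_mul, smul_smul, invDet_mul_det_gen, one_smul]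

lemma gen_mul_invGen : gen m * invGen m = 1 := by
  rw [invGen, Matrix.mul_smul, Matrix.mul_adjugate, smul_smul, invDet_mul_det_gen, one_smul]

def antipodeHom : AutCoordRing m →ₐ[K] AutCoordRing m :=
  lift (invGen m) (gen m).det
    ((respectsMul_gen m).of_mul_eq_one (gen_mul_invGen m) (invGen_mul_gen m)) <| by
      rw [← Matrix.det_mul, gen_mul_invGen, Matrix.det_one]

lemma comulHom_gen (k i : ι) : comulHom m (gen m k i) = ∑ j, gen m k j ⊗ₜ gen m j i := by
  rw [← Matrix.map_apply (f := comulHom m), comulHom, lift_gen, Matrix.mul_apply]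
  simp

lemma counitHom_gen (k i : ι) : counitHom m (gen m k i) = (1 : Matrix ι ι K) k i := by
  rw [← Matrix.map_apply (f := counitHom m), counitHom, lift_gen]

lemma antipodeHom_gen (k i : ι) : antipodeHom m (gen m k i) = invGen m k i := by
  rw [← Matrix.map_apply (f := antipodeHom m), antipodeHom, lift_gen]

instance : Bialgebra K (AutCoordRing m) :=
  Bialgebra.ofAlgHom (comulHom m) (counitHom m)
    (algHom_ext <| by
      ext k i
      simp only [Matrix.map_apply, AlgHom.comp_apply, comulHom_gen, map_sum,
        Algebra.TensorProduct.map_tmul, AlgHom.id_apply, AlgEquiv.coe_toAlgHom,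
        Algebra.TensorProduct.assoc_tmul, sum_tmul, tmul_sum]
      exact Finset.sum_comm)
    (algHom_ext <| by
      ext k i
      simp [comulHom_gen, counitHom_gen, Matrix.one_apply, ite_tmul])
    (algHom_ext <| by
      ext k i
      simp [comulHom_gen, counitHom_gen, Matrix.one_apply, tmul_ite])

lemma comul_gen (k i : ι) :
    Coalgebra.comul (R := K) (gen m k i) = ∑ j, gen m k j ⊗ₜ gen m j i :=
  comulHom_gen m k i

lemma counit_gen (k i : ι) : Coalgebra.counit (R := K) (gen m k i) = (1 : Matrix ι ι K) k i :=
  counitHom_gen m k i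

-- `HopfAlgebra.ofAlgHom` proves its commutation side condition only up to unfolding
-- `AlgHom.id`, so `lift_tmul` matches only with `erw`.
instance : HopfAlgebra K (AutCoordRing m) :=
  HopfAlgebra.ofAlgHom (antipodeHom m)
    (algHom_ext <| by
      ext k i
      simp only [Matrix.map_apply, AlgHom.comp_apply, Bialgebra.comulAlgHom_apply, comul_gen,
        map_sum, Bialgebra.counitAlgHom_apply, counit_gen, Algebra.ofId_apply]
      erw [Finset.sum_congr rfl fun j _ => Algebra.TensorProduct.lift_tmul _ _ _ _ _]
      simp only [antipodeHom_gen, AlgHom.id_apply, ← Matrix.mul_apply, invGen_mul_gen,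
        Matrix.one_apply]
      split_ifs <;> simp)
    (algHom_ext <| by
      ext k i
      simp only [Matrix.map_apply, AlgHom.comp_apply, Bialgebra.comulAlgHom_apply, comul_gen,
        map_sum, Bialgebra.counitAlgHom_apply, counit_gen, Algebra.ofId_apply]
      erw [Finset.sum_congr rfl fun j _ => Algebra.TensorProduct.lift_tmul _ _ _ _ _]
      simp only [antipodeHom_gen, AlgHom.id_apply, ← Matrix.mul_apply, gen_mul_invGen,
        Matrix.one_apply]
      split_ifs <;> simp)

end Hopf

section CoactionOfMatrix

variable {K : Type*} [CommRing K] {ι : Type*} [Fintype ι]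
  {A : Type*} [AddCommGroup A] [Module K A] (b : Module.Basis ι K A)
  {S T : Type*} [AddCommGroup S] [Module K S] [AddCommGroup T] [Module K T]

def coactionOfMatrix (u : Matrix ι ι S) : A →ₗ[K] A ⊗[K] S :=
  b.constr K fun i => ∑ k, b k ⊗ₜ u k i

lemma coactionOfMatrix_basis (u : Matrix ι ι S) (i : ι) :
    coactionOfMatrix b u (b i) = ∑ k, b k ⊗ₜ u k i :=
  b.constr_basis K _ i

lemma lTensor_comp_coactionOfMatrix (g : S →ₗ[K] T) (u : Matrix ι ι S) :
    g.lTensor A ∘ₗ coactionOfMatrix b u = coactionOfMatrix b (u.map g) :=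
  b.ext fun i => by simp [coactionOfMatrix_basis, map_sum]

variable [DecidableEq ι]

lemma equivFinsuppOfBasisLeft_sum_tmul (c : ι → S) (r : ι) :
    equivFinsuppOfBasisLeft b (∑ k, b k ⊗ₜ[K] c k) r = c r := by
  simp [map_sum, Finsupp.single_apply]

lemma sum_tmul_eq_equivFinsuppOfBasisLeft (x : A ⊗[K] S) :
    ∑ k, b k ⊗ₜ equivFinsuppOfBasisLeft b x k = x := by
  conv_rhs => rw [← (equivFinsuppOfBasisLeft b).symm_apply_apply x]
  rw [equivFinsuppOfBasisLeft_symm_apply, Finsupp.sum_fintype _ _ (by simp)]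

lemma sum_tmul_injective {c d : ι → S} (h : ∑ k, b k ⊗ₜ[K] c k = ∑ k, b k ⊗ₜ[K] d k) :
    c = d :=
  funext fun r => by
    rw [← equivFinsuppOfBasisLeft_sum_tmul b c, h, equivFinsuppOfBasisLeft_sum_tmul]

def coeffMatrix (f : A →ₗ[K] A ⊗[K] S) : Matrix ι ι S :=
  Matrix.of fun k i => equivFinsuppOfBasisLeft b (f (b i)) k

lemma coactionOfMatrix_coeffMatrix (f : A →ₗ[K] A ⊗[K] S) :
    coactionOfMatrix b (coeffMatrix b f) = f :=
  b.ext fun i => by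
    rw [coactionOfMatrix_basis]
    exact sum_tmul_eq_equivFinsuppOfBasisLeft b _

lemma coactionOfMatrix_injective :
    Function.Injective (coactionOfMatrix b : Matrix ι ι S → A →ₗ[K] A ⊗[K] S) :=
  fun u v h => Matrix.ext fun k i => by
    have hi := LinearMap.congr_fun h (b i)
    simp only [coactionOfMatrix_basis] at hi
    exact congrFun (sum_tmul_injective b hi) k

end CoactionOfMatrix

section Multiplicativity

variable {K : Type*} [CommRing K] {ι : Type*} [Fintype ι] [DecidableEq ι]
  {A : Type*} [NonUnitalRing A] [Module K A] (b : Module.Basis ι K A)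
  {S : Type*} [CommRing S] [Algebra K S]

def structConst (i j r : ι) : K := b.repr (b i * b j) r

lemma equivFinsuppOfBasisLeft_coactionOfMatrix_basis_mul (u : Matrix ι ι S) (i j r : ι) :
    equivFinsuppOfBasisLeft b (coactionOfMatrix b u (b i * b j)) r =
      ∑ c, structConst b i j c • u r c := by
  rw [← b.sum_repr (b i * b j)]
  simp [coactionOfMatrix_basis, map_sum, Finsupp.single_apply, structConst, -Module.Basis.sum_repr]

variable [SMulCommClass K A A] [IsScalarTower K A A]

lemma equivFinsuppOfBasisLeft_coactionOfMatrix_mul (u : Matrix ι ι S) (i j r : ι) :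
    equivFinsuppOfBasisLeft b (coactionOfMatrix b u (b i) * coactionOfMatrix b u (b j)) r =
      ∑ k, ∑ l, structConst b k l r • (u k i * u l j) := by
  simp [coactionOfMatrix_basis, Finset.sum_mul_sum, Algebra.TensorProduct.tmul_mul_tmul, map_sum,
    structConst]

lemma coactionOfMatrix_map_mul_iff (u : Matrix ι ι S) :
    (∀ x y, coactionOfMatrix b u (x * y) = coactionOfMatrix b u x * coactionOfMatrix b u y) ↔
      RespectsMul (structConst b) u := by
  have hbasis : ∀ i j r, mulDefect (structConst b) u r i j =
      equivFinsuppOfBasisLeft b (coactionOfMatrix b u (b i) * coactionOfMatrix b u (b j)) r -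
        equivFinsuppOfBasisLeft b (coactionOfMatrix b u (b i * b j)) r := fun i j r => by
    rw [mulDefect_apply, equivFinsuppOfBasisLeft_coactionOfMatrix_mul,
      equivFinsuppOfBasisLeft_coactionOfMatrix_basis_mul]
  constructor
  · intro h r
    ext i j
    rw [hbasis, h, sub_self, Matrix.zero_apply]
  · intro hu
    suffices (LinearMap.mul K A).compr₂ (coactionOfMatrix b u) =
        (LinearMap.mul K (A ⊗[K] S)).compl₁₂ (coactionOfMatrix b u) (coactionOfMatrix b u) from
      fun x y => LinearMap.congr_fun₂ this x y
    refine LinearMap.ext_basis b b fun i j => (equivFinsuppOfBasisLeft b).injective ?_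
    ext r
    have hrij := congr_fun₂ (hu r) i j
    rw [hbasis, Matrix.zero_apply, sub_eq_zero] at hrij
    exact hrij.symm

end Multiplicativity

section Corepresentation

variable (K : Type*) [CommRing K] {ι : Type*} [Fintype ι] [DecidableEq ι]

/-- The matrices of coefficients of finite-dimensional comodules with respect to a basis. -/
def IsMultiplicative {B : Type*} [AddCommGroup B] [Module K B] [Coalgebra K B]
    (u : Matrix ι ι B) : Prop :=
  (∀ k i, Coalgebra.counit (R := K) (u k i) = (1 : Matrix ι ι K) k i) ∧
    ∀ k i, Coalgebra.comul (R := K) (u k i) = ∑ j, u k j ⊗ₜ[K] u j i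

variable {K}

section Ring

variable {B : Type*} [Ring B] [HopfAlgebra K B] {u : Matrix ι ι B}

lemma IsMultiplicative.map_antipode_mul (hu : IsMultiplicative K u) :
    u.map (HopfAlgebra.antipode K) * u = 1 := by
  ext k i
  have h := HopfAlgebra.mul_antipode_rTensor_comul_apply (R := K) (u k i)
  rw [hu.2, hu.1, map_sum, map_sum] at h
  simpa [Matrix.mul_apply, Matrix.one_apply, apply_ite] using h

lemma IsMultiplicative.mul_map_antipode (hu : IsMultiplicative K u) :
    u * u.map (HopfAlgebra.antipode K) = 1 := by
  ext k i
  have h := HopfAlgebra.mul_antipode_lTensor_comul_apply (R := K) (u k i)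
  rw [hu.2, hu.1, map_sum, map_sum] at h
  simpa [Matrix.mul_apply, Matrix.one_apply, apply_ite] using h

end Ring

lemma IsMultiplicative.det_map_antipode_mul_det {B : Type*} [CommRing B] [HopfAlgebra K B]
    {u : Matrix ι ι B} (hu : IsMultiplicative K u) :
    (u.map (HopfAlgebra.antipode K)).det * u.det = 1 := by
  rw [← Matrix.det_mul, hu.map_antipode_mul, Matrix.det_one]

end Corepresentation

section ComoduleAxioms

variable {K : Type*} [CommRing K] {ι : Type*} [Fintype ι]
  {A : Type*} [AddCommGroup A] [Module K A] (b : Module.Basis ι K A)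
  {B : Type*} [AddCommGroup B] [Module K B]

lemma assoc_comp_rTensor_comp_coactionOfMatrix (u : Matrix ι ι B) :
    (TensorProduct.assoc K A B B).toLinearMap ∘ₗ (coactionOfMatrix b u).rTensor B ∘ₗ
      coactionOfMatrix b u = coactionOfMatrix b (Matrix.of fun k i => ∑ j, u k j ⊗ₜ[K] u j i) :=
  b.ext fun i => by
    simp only [LinearMap.comp_apply, coactionOfMatrix_basis, map_sum, LinearMap.rTensor_tmul,
      sum_tmul, LinearEquiv.coe_coe, assoc_tmul, Matrix.of_apply, tmul_sum]
    exact Finset.sum_comm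

variable [DecidableEq ι]

lemma rid_comp_coactionOfMatrix (v : Matrix ι ι K) :
    (TensorProduct.rid K A).toLinearMap ∘ₗ coactionOfMatrix b v = Matrix.toLin b b v :=
  b.ext fun i => by simp [coactionOfMatrix_basis, Matrix.toLin_self]

lemma rid_comp_lTensor_comp_coactionOfMatrix_eq_id_iff (ε : B →ₗ[K] K) (u : Matrix ι ι B) :
    (TensorProduct.rid K A).toLinearMap ∘ₗ ε.lTensor A ∘ₗ coactionOfMatrix b u = LinearMap.id ↔
      u.map ε = 1 := by
  rw [lTensor_comp_coactionOfMatrix, rid_comp_coactionOfMatrix, ← Matrix.toLin_one b,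
    (Matrix.toLin b b).injective.eq_iff]

lemma lTensor_comp_coactionOfMatrix_eq_assoc_iff (Δ : B →ₗ[K] B ⊗[K] B) (u : Matrix ι ι B) :
    Δ.lTensor A ∘ₗ coactionOfMatrix b u = (TensorProduct.assoc K A B B).toLinearMap ∘ₗ
        (coactionOfMatrix b u).rTensor B ∘ₗ coactionOfMatrix b u ↔
      ∀ k i, Δ (u k i) = ∑ j, u k j ⊗ₜ[K] u j i := by
  rw [lTensor_comp_coactionOfMatrix, assoc_comp_rTensor_comp_coactionOfMatrix,
    (coactionOfMatrix_injective b).eq_iff, ← Matrix.ext_iff]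
  rfl

end ComoduleAxioms

lemma isAlgCoaction_iff {K : Type u} [Field K] {ι : Type*} [Fintype ι] [DecidableEq ι]
    {A : Type u} [NonUnitalRing A] [Module K A] [SMulCommClass K A A] [IsScalarTower K A A]
    (b : Module.Basis ι K A) {B : Type u} [CommRing B] [Bialgebra K B]
    {η : A →ₙₐ[K] A ⊗[K] B} {u : Matrix ι ι B}
    (hη : (η : A →ₗ[K] A ⊗[K] B) = coactionOfMatrix b u) :
    IsAlgCoaction K A B η ↔ IsMultiplicative K u := by
  have hε := rid_comp_lTensor_comp_coactionOfMatrix_eq_id_iff b Coalgebra.counit u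
  have hΔ := lTensor_comp_coactionOfMatrix_eq_assoc_iff b Coalgebra.comul u
  rw [← hη, LinearMap.ext_iff] at hε hΔ
  rw [← Matrix.ext_iff] at hε
  exact and_congr hε hΔ

section UniversalCoaction

variable {K : Type*} [CommRing K] {ι : Type*} [Fintype ι] [DecidableEq ι]
  {A : Type*} [NonUnitalRing A] [Module K A] [SMulCommClass K A A] [IsScalarTower K A A]
  (b : Module.Basis ι K A)

def universalCoaction : A →ₙₐ[K] A ⊗[K] AutCoordRing (structConst b) :=
  { coactionOfMatrix b (gen (structConst b)) with
    map_zero' := (coactionOfMatrix b _).map_zero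
    map_mul' := (coactionOfMatrix_map_mul_iff b _).2 (respectsMul_gen _) }

lemma universalCoaction_toLinearMap :
    (universalCoaction b : A →ₗ[K] A ⊗[K] AutCoordRing (structConst b)) =
      coactionOfMatrix b (gen (structConst b)) :=
  rfl

lemma respectsMul_coeffMatrix {S : Type*} [CommRing S] [Algebra K S] (ψ : A →ₙₐ[K] A ⊗[K] S) :
    RespectsMul (structConst b) (coeffMatrix b (ψ : A →ₗ[K] A ⊗[K] S)) :=
  (coactionOfMatrix_map_mul_iff b _).1 <| by
    rw [coactionOfMatrix_coeffMatrix]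
    exact map_mul ψ

lemma forall_eq_lTensor_universalCoaction_iff {S : Type*} [CommRing S] [Algebra K S]
    (ψ : A →ₙₐ[K] A ⊗[K] S) (Φ : AutCoordRing (structConst b) →ₗ[K] S) :
    (∀ a, ψ a = Φ.lTensor A (universalCoaction b a)) ↔
      (gen (structConst b)).map Φ = coeffMatrix b (ψ : A →ₗ[K] A ⊗[K] S) := by
  rw [← (coactionOfMatrix_injective b).eq_iff, coactionOfMatrix_coeffMatrix,
    ← lTensor_comp_coactionOfMatrix, ← universalCoaction_toLinearMap, eq_comm, LinearMap.ext_iff]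
  rfl

variable {m : ι → ι → ι → K} {H : Type*} [CommRing H] [HopfAlgebra K H]

def liftBialgHom (u : Matrix ι ι H) (hu : RespectsMul m u) (hmul : IsMultiplicative K u) :
    AutCoordRing m →ₐc[K] H :=
  .ofAlgHom (lift u _ hu hmul.det_map_antipode_mul_det)
    (algHom_ext <| by
      ext k i
      simp [lift_gen_apply, hmul.1, counit_gen])
    (algHom_ext <| by
      ext k i
      simp [lift_gen_apply, hmul.2, comul_gen])

lemma liftBialgHom_gen (u : Matrix ι ι H) (hu : RespectsMul m u) (hmul : IsMultiplicative K u) :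
    (gen m).map (liftBialgHom u hu hmul) = u :=
  lift_gen u _ hu hmul.det_map_antipode_mul_det

end UniversalCoaction

section UniversalProperty

variable {K : Type u} [Field K] {ι : Type} [Fintype ι] [DecidableEq ι]
  {A : Type u} [NonUnitalRing A] [Module K A] [SMulCommClass K A A] [IsScalarTower K A A]
  (b : Module.Basis ι K A)

lemma isAlgCoaction_universalCoaction :
    IsAlgCoaction K A (AutCoordRing (structConst b)) (universalCoaction b) :=
  (isAlgCoaction_iff b (universalCoaction_toLinearMap b)).2 ⟨counit_gen _, comul_gen _⟩

lemma existsUnique_bialgHom_universalCoaction {H : Type u} [CommRing H] [HopfAlgebra K H]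
    (ψ : A →ₙₐ[K] A ⊗[K] H) (hψ : IsAlgCoaction K A H ψ) :
    ∃! Φ : AutCoordRing (structConst b) →ₐc[K] H,
      ∀ a, ψ a = Φ.toLinearMap.lTensor A (universalCoaction b a) := by
  have hu := respectsMul_coeffMatrix b ψ
  have hmul : IsMultiplicative K (coeffMatrix b (ψ : A →ₗ[K] A ⊗[K] H)) :=
    (isAlgCoaction_iff b (coactionOfMatrix_coeffMatrix b _).symm).1 hψ
  refine ⟨liftBialgHom _ hu hmul, ?_, fun Φ hΦ => ?_⟩
  · exact (forall_eq_lTensor_universalCoaction_iff b ψ _).2 (liftBialgHom_gen _ hu hmul)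
  · refine BialgHom.coe_toAlgHom_injective (algHom_ext ?_)
    exact ((forall_eq_lTensor_universalCoaction_iff b ψ _).1 hΦ).trans
      (liftBialgHom_gen _ hu hmul).symm

end UniversalProperty

end UniversalCoaction

end

theorem exists_universalAlgCoactingHopfAlgebra_general
    (K : Type u) [Field K]
    (A : Type u) [NonUnitalRing A] [Module K A] [SMulCommClass K A A] [IsScalarTower K A A]
    [FiniteDimensional K A] :
    Nonempty (UniversalAlgCoactingHopfAlgebra K A) :=
  let b := Module.finBasis K A
  ⟨{ H := UniversalCoaction.AutCoordRing (UniversalCoaction.structConst b)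
     lam := UniversalCoaction.universalCoaction b
     coaction := UniversalCoaction.isAlgCoaction_universalCoaction b
     universal := fun _ _ _ ψ hψ =>
       UniversalCoaction.existsUnique_bialgHom_universalCoaction b ψ hψ }⟩

/-- Every finite-dimensional non-unital associative algebra over a field of characteristic
zero admits a universal coacting commutative Hopf algebra. -/
theorem exists_universalAlgCoactingHopfAlgebra
    (K : Type u) [Field K] [CharZero K]
    (A : Type u) [NonUnitalRing A] [Module K A] [SMulCommClass K A A] [IsScalarTower K A A]
    [FiniteDimensional K A] :
    Nonempty (UniversalAlgCoactingHopfAlgebra K A) :=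
  exists_universalAlgCoactingHopfAlgebra_general K A
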